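/- arXiv:gr-qc/0603008 — 4 statements merged into one kernel-verified Lean document; each statement's English description precedes it below -/
import Mathlib

section
/- For all indices a, b, c, d ∈ Fin 2, the Haar integral ∫_{SU(2)} g(a,b) · conj(g(c,d)) dμ(g) of the product of a matrix entry of g with the complex conjugate of a matrix entry of g equals 1/2 if a = c and b = d, and equals 0 otherwise. (This is the orthogonality relation ∫ dg conj(D^j_{ab}(g)) D^k_{cd}(g) = (δ_{jk}/d_j) δ_{ac} δ_{bd} for the matrix coefficients of irreducible representations, specialized to the fundamental spin-1/2 representation, where d_{1/2} = 2.) -/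
/-!
Right or left multiplication by `diag(i, -i)` multiplies `g(a,b) · conj (g(c,d))` by `-1` as soon
as `b ≠ d` or `a ≠ c`, so by invariance of the Haar measure these integrals vanish. Right
multiplication by `!![0, 1; -1, 0]` exchanges `|g(a,0)|²` and `|g(a,1)|²`, which sum to `1` by
unitarity, so each has integral `1/2`.
-/

open MeasureTheory Matrix

noncomputable section

/-- `SU(2)`: the special unitary group of `2 × 2` complex matrices. -/
abbrev SU2 := Matrix.specialUnitaryGroup (Fin 2) ℂ

/-- The group structure on `SU(2)` (inverse given by the conjugate transpose). -/
instance : Group SU2 :=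
  { (inferInstance : Monoid SU2) with
    inv := fun g =>
      ⟨star g.1, Submonoid.mem_inf.2
        ⟨Unitary.star_mem (Submonoid.mem_inf.1 g.2).1, by
          have h : (g.1).det = 1 := (Submonoid.mem_inf.1 g.2).2
          simp [MonoidHom.mem_mker, Matrix.star_eq_conjTranspose, Matrix.det_conjTranspose, h]⟩⟩
    inv_mul_cancel := fun g => Subtype.ext (Submonoid.mem_inf.1 g.2).1.1 }

/-- The Borel σ-algebra on `SU(2)` (with its subspace topology). -/
instance : MeasurableSpace SU2 := borel _

instance : BorelSpace SU2 := ⟨rfl⟩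

instance : ContinuousInv SU2 :=
  ⟨continuous_induced_rng.2 <| continuous_star.comp continuous_subtype_val⟩

instance : IsTopologicalGroup SU2 := {}

section UnitaryMatrix

variable {n 𝕜 : Type*} [Fintype n] [DecidableEq n] [RCLike 𝕜]

theorem Matrix.sum_mul_star_row_of_mem_unitaryGroup {U : Matrix n n 𝕜}
    (hU : U ∈ unitaryGroup n 𝕜) (i : n) : ∑ j, U i j * star (U i j) = 1 := by
  simpa [Matrix.mul_apply, Matrix.star_apply] using
    congrFun (congrFun (mem_unitaryGroup_iff.1 hU) i) i

theorem Matrix.isCompact_specialUnitaryGroup :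
    IsCompact (specialUnitaryGroup n 𝕜 : Set (Matrix n n 𝕜)) := by
  have hball : IsCompact (Set.univ.pi fun _ : n => Set.univ.pi fun _ : n =>
      Metric.closedBall (0 : 𝕜) 1) :=
    isCompact_univ_pi fun _ => isCompact_univ_pi fun _ => isCompact_closedBall 0 1
  refine hball.of_isClosed_subset ?_ fun U hU i _ j _ => ?_
  · exact (isClosed_unitary (R := Matrix n n 𝕜)).inter
      (isClosed_singleton.preimage continuous_id.matrix_det)
  · simpa using entry_norm_bound_of_unitary (mem_specialUnitaryGroup_iff.1 hU).1 i j

instance : CompactSpace (specialUnitaryGroup n 𝕜) :=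
  isCompact_iff_compactSpace.1 isCompact_specialUnitaryGroup

end UnitaryMatrix

section HaarIntegral

variable {G 𝕜 : Type*} [Group G] [MeasurableSpace G] [RCLike 𝕜]

theorem isMulRightInvariant_of_isHaarMeasure_of_isProbabilityMeasure [TopologicalSpace G]
    [IsTopologicalGroup G] [LocallyCompactSpace G] [BorelSpace G]
    (μ : Measure G) [μ.IsHaarMeasure] [IsProbabilityMeasure μ] : μ.IsMulRightInvariant where
  map_mul_right_eq_self g := by
    have : IsProbabilityMeasure (μ.map (· * g)) :=
      Measure.isProbabilityMeasure_map (measurable_mul_const g).aemeasurable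
    exact Measure.isHaarMeasure_eq_of_isProbabilityMeasure _ μ

theorem integral_eq_zero_of_mul_right_eq_mul [MeasurableMul G] (μ : Measure G)
    [μ.IsMulRightInvariant] {f : G → 𝕜} {h : G} {c : 𝕜} (hc : c ≠ 1)
    (hf : ∀ x, f (x * h) = c * f x) : ∫ x, f x ∂μ = 0 := by
  have hinv := integral_mul_right_eq_self f h (μ := μ)
  simp only [hf, integral_const_mul] at hinv
  exact (mul_left_eq_self₀.1 hinv).resolve_left hc

theorem integral_eq_zero_of_mul_left_eq_mul [MeasurableMul G] (μ : Measure G)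
    [μ.IsMulLeftInvariant] {f : G → 𝕜} {h : G} {c : 𝕜} (hc : c ≠ 1)
    (hf : ∀ x, f (h * x) = c * f x) : ∫ x, f x ∂μ = 0 := by
  have hinv := integral_mul_left_eq_self f h (μ := μ)
  simp only [hf, integral_const_mul] at hinv
  exact (mul_left_eq_self₀.1 hinv).resolve_left hc

end HaarIntegral

namespace SU2

open ComplexConjugate

def phase : Fin 2 → ℂ := ![Complex.I, -Complex.I]

theorem phase_mul_conj_phase_of_ne {b d : Fin 2} (hbd : b ≠ d) :
    phase b * conj (phase d) = -1 := by
  fin_cases b <;> fin_cases d <;> simp_all [phase]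

def diagPhase : SU2 :=
  ⟨diagonal phase, mem_specialUnitaryGroup_iff.2
    ⟨mem_unitaryGroup_iff.2 <| by
      ext i j; fin_cases i <;> fin_cases j <;> simp [phase, star_eq_conjTranspose],
    by simp [phase]⟩⟩

def rot : SU2 :=
  ⟨!![0, 1; -1, 0], mem_specialUnitaryGroup_iff.2
    ⟨mem_unitaryGroup_iff.2 <| by
      ext i j; fin_cases i <;> fin_cases j <;>
        simp [Matrix.mul_apply, Fin.sum_univ_two, star_eq_conjTranspose],
    by simp [det_fin_two]⟩⟩

theorem continuous_entry (a b : Fin 2) : Continuous fun g : SU2 => g.1 a b :=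
  (_root_.continuous_apply b).comp ((_root_.continuous_apply a).comp continuous_subtype_val)

variable (μ : Measure SU2) [μ.IsHaarMeasure]

theorem integral_apply_mul_conj_eq_zero_of_right_ne [IsProbabilityMeasure μ] (a c : Fin 2)
    {b d : Fin 2} (hbd : b ≠ d) :
    ∫ g : SU2, g.1 a b * conj (g.1 c d) ∂μ = 0 := by
  have := isMulRightInvariant_of_isHaarMeasure_of_isProbabilityMeasure μ
  refine integral_eq_zero_of_mul_right_eq_mul μ (h := diagPhase) (c := -1) (by norm_num)
    fun g => ?_
  change (g.1 * diagonal phase) a b * conj ((g.1 * diagonal phase) c d) = _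
  rw [mul_diagonal, mul_diagonal, map_mul, ← phase_mul_conj_phase_of_ne hbd]
  ring

theorem integral_apply_mul_conj_eq_zero_of_left_ne {a c : Fin 2} (hac : a ≠ c) (b d : Fin 2) :
    ∫ g : SU2, g.1 a b * conj (g.1 c d) ∂μ = 0 := by
  refine integral_eq_zero_of_mul_left_eq_mul μ (h := diagPhase) (c := -1) (by norm_num)
    fun g => ?_
  change (diagonal phase * g.1) a b * conj ((diagonal phase * g.1) c d) = _
  rw [diagonal_mul, diagonal_mul, map_mul, ← phase_mul_conj_phase_of_ne hac]
  ring

theorem integral_apply_mul_conj_self [IsProbabilityMeasure μ] (a b : Fin 2) :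
    ∫ g : SU2, g.1 a b * conj (g.1 a b) ∂μ = 1 / 2 := by
  have := isMulRightInvariant_of_isHaarMeasure_of_isProbabilityMeasure μ
  have hint (j : Fin 2) : Integrable (fun g : SU2 => g.1 a j * conj (g.1 a j)) μ :=
    ((continuous_entry a j).mul (continuous_entry a j).star).integrable_of_hasCompactSupport
      (.of_compactSpace _)
  have hrot : ∫ g : SU2, g.1 a 0 * conj (g.1 a 0) ∂μ =
      ∫ g : SU2, g.1 a 1 * conj (g.1 a 1) ∂μ := by
    have hcol (g : SU2) : (g * rot).1 a 0 = -g.1 a 1 := by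
      simp [rot, Matrix.mul_apply]
    rw [← integral_mul_right_eq_self _ rot]
    simp only [hcol, map_neg, neg_mul_neg]
  have hsum : ∫ g : SU2, g.1 a 0 * conj (g.1 a 0) ∂μ +
      ∫ g : SU2, g.1 a 1 * conj (g.1 a 1) ∂μ = 1 := by
    rw [← integral_add (hint 0) (hint 1)]
    have hrow (g : SU2) : g.1 a 0 * conj (g.1 a 0) + g.1 a 1 * conj (g.1 a 1) = 1 := by
      simpa [Fin.sum_univ_two] using
        sum_mul_star_row_of_mem_unitaryGroup (mem_specialUnitaryGroup_iff.1 g.2).1 a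
    simp [hrow]
  obtain rfl | rfl : b = 0 ∨ b = 1 := by omega
  · linear_combination (hsum + hrot) / 2
  · linear_combination (hsum - hrot) / 2

end SU2

/-- Orthogonality of matrix coefficients of the fundamental representation of `SU(2)`:
`∫ g(a,b) conj (g(c,d)) dμ(g) = (1/2) δ_{ac} δ_{bd}`. -/
theorem haar_integral_matrix_coeff_orthogonality (μ : Measure SU2) [μ.IsHaarMeasure]
    [IsProbabilityMeasure μ] (a b c d : Fin 2) :
    ∫ g : SU2, (g : SU2).1 a b * (starRingEnd ℂ) ((g : SU2).1 c d) ∂μ =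
      if a = c ∧ b = d then (1 / 2 : ℂ) else 0 := by
  split_ifs with h
  · obtain ⟨rfl, rfl⟩ := h
    exact SU2.integral_apply_mul_conj_self μ a b
  · rcases ne_or_eq a c with hac | rfl
    · exact SU2.integral_apply_mul_conj_eq_zero_of_left_ne μ hac b d
    · exact SU2.integral_apply_mul_conj_eq_zero_of_right_ne μ a a (by tauto)
end
end

section
/- For all indices a, b, c, d ∈ Fin 2, the Haar integral ∫_{SU(2)} g(a,b) · g(c,d) dμ(g) equals (1/2) ε(a,c) ε(b,d), where ε is the antisymmetric symbol on Fin 2 given by ε(0,1) = 1, ε(1,0) = −1, ε(0,0) = ε(1,1) = 0. (This expresses that group-averaging the two-fold tensor power of the fundamental representation, ∫ dg D^{1/2}(g) ⊗ D^{1/2}(g), is the orthogonal projection onto the one-dimensional singlet subspace of V^{1/2} ⊗ V^{1/2}, spanned by (|↑↓⟩ − |↓↑⟩)/√2.) -/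
open MeasureTheory Matrix

noncomputable section

/-- The antisymmetric symbol `ε` on `Fin 2`: `ε(0,1) = 1`, `ε(1,0) = −1`, `ε(0,0) = ε(1,1) = 0`. -/
def eps : Fin 2 → Fin 2 → ℂ := fun a b =>
  if a = 0 ∧ b = 1 then 1 else if a = 1 ∧ b = 0 then -1 else 0

lemma continuous_entry (a b : Fin 2) : Continuous fun g : SU2 => g.1 a b :=
  continuous_subtype_val.matrix_elem a b

lemma integrable_entry_mul_entry (μ : Measure SU2) [IsFiniteMeasure μ] (a b c d : Fin 2) :
    Integrable (fun g : SU2 => g.1 a b * g.1 c d) μ := by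
  refine .of_bound ((continuous_entry a b).mul (continuous_entry c d)).aestronglyMeasurable 1
    (.of_forall fun g => ?_)
  have hg := (mem_specialUnitaryGroup_iff.1 g.2).1
  simpa [norm_mul] using mul_le_one₀ (entry_norm_bound_of_unitary hg a b) (norm_nonneg _)
    (entry_norm_bound_of_unitary hg c d)

def entryPairIntegral (μ : Measure SU2) (b d : Fin 2) : Matrix (Fin 2) (Fin 2) ℂ :=
  Matrix.of fun a c => ∫ g : SU2, g.1 a b * g.1 c d ∂μ

lemma entryPairIntegral_conj_invariant (μ : Measure SU2) [IsFiniteMeasure μ]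
    [μ.IsMulLeftInvariant] (b d : Fin 2) (h : SU2) :
    h.1 * entryPairIntegral μ b d * h.1ᵀ = entryPairIntegral μ b d := by
  ext a c
  have hexpand : ∀ g : SU2, (h * g).1 a b * (h * g).1 c d
      = ∑ c', ∑ a', h.1 a a' * h.1 c c' * (g.1 a' b * g.1 c' d) := by
    intro g
    simp only [Submonoid.coe_mul, mul_apply, Fin.sum_univ_two]
    ring
  calc (h.1 * entryPairIntegral μ b d * h.1ᵀ) a c
      = ∑ c', ∑ a', h.1 a a' * h.1 c c' * ∫ g : SU2, g.1 a' b * g.1 c' d ∂μ := by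
        simp only [entryPairIntegral, mul_apply, transpose_apply, of_apply, Finset.sum_mul]
        exact Finset.sum_congr rfl fun _ _ => Finset.sum_congr rfl fun _ _ => by ring
    _ = ∫ g : SU2, (h * g).1 a b * (h * g).1 c d ∂μ := by
        simp only [hexpand]
        rw [integral_finsetSum _ fun c' _ => integrable_finsetSum _ fun a' _ =>
          (integrable_entry_mul_entry μ a' b c' d).const_mul _]
        refine Finset.sum_congr rfl fun c' _ => ?_
        rw [integral_finsetSum _ fun a' _ => (integrable_entry_mul_entry μ a' b c' d).const_mul _]
        simp only [integral_const_mul]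
    _ = entryPairIntegral μ b d a c :=
        integral_mul_left_eq_self (fun g : SU2 => g.1 a b * g.1 c d) h

namespace SU2

def diagI : SU2 :=
  ⟨!![Complex.I, 0; 0, -Complex.I], mem_specialUnitaryGroup_iff.2 ⟨mem_unitaryGroup_iff'.2
    (by ext i j; fin_cases i <;> fin_cases j <;> simp [mul_apply, Fin.sum_univ_two]),
    by simp [det_fin_two]⟩⟩

def weyl : SU2 :=
  ⟨!![0, 1; -1, 0], mem_specialUnitaryGroup_iff.2 ⟨mem_unitaryGroup_iff'.2
    (by ext i j; fin_cases i <;> fin_cases j <;> simp [mul_apply, Fin.sum_univ_two]),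
    by simp [det_fin_two]⟩⟩

end SU2

-- The diagonal element diag(i, -i) kills the diagonal entries, the Weyl element forces antisymmetry.
lemma eq_eps_mul_of_conj_invariant {X : Matrix (Fin 2) (Fin 2) ℂ}
    (hX : ∀ h : SU2, h.1 * X * h.1ᵀ = X) (a c : Fin 2) : X a c = eps a c * X 0 1 := by
  have hdiag := fun i j => congrFun₂ (hX SU2.diagI) i j
  have hrot := fun i j => congrFun₂ (hX SU2.weyl) i j
  simp only [SU2.diagI, SU2.weyl, mul_apply, transpose_apply, Fin.sum_univ_two] at hdiag hrot
  have h00 : X 0 0 = 0 := by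
    linear_combination (by simpa using hdiag 0 0 : Complex.I * X 0 0 * Complex.I = X 0 0) / -2
      + X 0 0 / 2 * Complex.I_sq
  have h11 : X 1 1 = 0 := by
    linear_combination (by simpa using hdiag 1 1 : Complex.I * X 1 1 * Complex.I = X 1 1) / -2
      + X 1 1 / 2 * Complex.I_sq
  have h10 : X 1 0 = -X 0 1 := (by simpa using hrot 1 0 : -X 0 1 = X 1 0).symm
  fin_cases a <;> fin_cases c <;> simp [eps, h00, h11, h10]

lemma sub_eq_eps_mul_det (M : Matrix (Fin 2) (Fin 2) ℂ) (b d : Fin 2) :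
    M 0 b * M 1 d - M 1 b * M 0 d = eps b d * M.det := by
  rw [det_fin_two]; fin_cases b <;> fin_cases d <;> simp [eps] <;> ring

lemma entryPairIntegral_zero_one_sub_one_zero (μ : Measure SU2) [IsProbabilityMeasure μ] (b d : Fin 2) :
    entryPairIntegral μ b d 0 1 - entryPairIntegral μ b d 1 0 = eps b d := by
  have hdet : ∀ g : SU2, g.1 0 b * g.1 1 d - g.1 1 b * g.1 0 d = eps b d := fun g => by
    rw [sub_eq_eps_mul_det, (mem_specialUnitaryGroup_iff.1 g.2).2, mul_one]
  simp only [entryPairIntegral, of_apply]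
  rw [← integral_sub (integrable_entry_mul_entry μ 0 b 1 d) (integrable_entry_mul_entry μ 1 b 0 d)]
  simp [hdet]

/-- Group-averaging the two-fold tensor power of the fundamental representation projects onto the
singlet: `∫ g(a,b) g(c,d) dμ(g) = (1/2) ε(a,c) ε(b,d)`. -/
theorem haar_integral_singlet_projection (μ : Measure SU2) [μ.IsHaarMeasure]
    [IsProbabilityMeasure μ] (a b c d : Fin 2) :
    ∫ g : SU2, (g : SU2).1 a b * (g : SU2).1 c d ∂μ = (1 / 2 : ℂ) * eps a c * eps b d := by
  have hX := eq_eps_mul_of_conj_invariant (entryPairIntegral_conj_invariant μ b d)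
  have h01 : entryPairIntegral μ b d 0 1 = eps b d / 2 := by
    have h10 : entryPairIntegral μ b d 1 0 = -entryPairIntegral μ b d 0 1 := by
      simpa [eps] using hX 1 0
    linear_combination entryPairIntegral_zero_one_sub_one_zero μ b d / 2 + h10 / 2
  calc ∫ g : SU2, (g : SU2).1 a b * (g : SU2).1 c d ∂μ = entryPairIntegral μ b d a c := rfl
    _ = eps a c * (eps b d / 2) := by rw [hX, h01]
    _ = (1 / 2 : ℂ) * eps a c * eps b d := by ring
end
end

section
/- The sequence n ↦ (catalan n) · √π · n^{3/2} / 4^n tends to 1 as n → ∞, where catalan n = C(2n,n)/(n+1). Consequently, log dim H^{(2n)}_{trivial} = log(C(2n,n) − C(2n,n+1)) behaves asymptotically as 2n·log 2 − (3/2)·log n + O(1). (This is the paper's count of the coarse-grained degrees of freedom for a region with trivial internal graph topology and 2n spin-1/2 boundary edges.) -/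
/-!
Catalan numbers satisfy `(n + 1) · catalan n = C(2n, n) = (2n)! / (n!)²`. Feeding Stirling's
formula `n! ∼ √(2πn) (n/e)ⁿ` into the factorials gives `C(2n, n) ∼ 4ⁿ / √(πn)`, and dividing by
`n + 1 ∼ n` gives `catalan n ∼ 4ⁿ / (√π n^{3/2})`.
-/

open Filter Asymptotics Real Nat

theorem cast_centralBinom_eq_factorial_div (n : ℕ) :
    (n.centralBinom : ℝ) = (2 * n)! / (n ! * n !) := by
  rw [centralBinom_eq_two_mul_choose, cast_choose ℝ (by omega), two_mul, Nat.add_sub_cancel]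

theorem stirling_two_mul_div_stirling_mul_self (n : ℕ) :
    √(2 * (2 * n) * π) * (2 * n / exp 1) ^ (2 * n) /
        (√(2 * n * π) * (n / exp 1) ^ n * (√(2 * n * π) * (n / exp 1) ^ n)) =
      4 ^ n / √(π * n) := by
  rcases Nat.eq_zero_or_pos n with rfl | hn
  · simp
  have hnum : √(2 * (2 * n) * π) * (2 * n / exp 1) ^ (2 * n) =
      2 * √(π * n) * (4 ^ n * ((n / exp 1) ^ n) ^ 2) := by
    rw [show (2 : ℝ) * (2 * n) * π = 2 ^ 2 * (π * n) by ring, sqrt_mul' _ (by positivity),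
      sqrt_sq two_pos.le, show (4 : ℝ) = 2 ^ 2 by norm_num, ← pow_mul]
    ring
  have hden : √(2 * n * π) * (n / exp 1) ^ n * (√(2 * n * π) * (n / exp 1) ^ n) =
      2 * √(π * n) ^ 2 * ((n / exp 1) ^ n) ^ 2 := by
    rw [mul_mul_mul_comm, mul_self_sqrt (by positivity), sq_sqrt (by positivity)]
    ring
  have : 0 < √(π * n) := by positivity
  rw [hnum, hden]
  field_simp

theorem centralBinom_isEquivalent :
    (fun n : ℕ ↦ (n.centralBinom : ℝ)) ~[atTop] fun n ↦ 4 ^ n / √(π * n) := by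
  have stirling := Stirling.factorial_isEquivalent_stirling
  have h2n : Tendsto (fun n : ℕ ↦ 2 * n) atTop atTop := tendsto_id.const_mul_atTop' two_pos
  refine ((stirling.comp_tendsto h2n).div (stirling.mul stirling)
    |>.congr_left (.of_eq (funext fun n ↦ ?_))).congr_right (.of_eq (funext fun n ↦ ?_))
  · exact (cast_centralBinom_eq_factorial_div n).symm
  · simpa using stirling_two_mul_div_stirling_mul_self n

theorem catalan_isEquivalent :
    (fun n ↦ (catalan n : ℝ)) ~[atTop] fun n ↦ 4 ^ n / (√π * n ^ (3 / 2 : ℝ)) := by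
  have hsucc : (fun n : ℕ ↦ (n : ℝ) + 1) ~[atTop] fun n ↦ (n : ℝ) :=
    IsEquivalent.refl.add_const_of_norm_tendsto_atTop
      (tendsto_norm_atTop_atTop.comp tendsto_natCast_atTop_atTop)
  refine ((centralBinom_isEquivalent.div hsucc).congr_left (.of_eq (funext fun n ↦ ?_))).congr_right
    (.of_eq (funext fun n ↦ ?_))
  · rw [Pi.div_apply, ← succ_mul_catalan_eq_centralBinom]
    push_cast
    field_simp
  · have h32 : (n : ℝ) ^ (3 / 2 : ℝ) = √n * n := by
      rw [show (3 / 2 : ℝ) = 1 / 2 + 1 by norm_num, rpow_add' n.cast_nonneg (by norm_num),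
        rpow_one, ← sqrt_eq_rpow]
    rw [Pi.div_apply, div_div, h32, sqrt_mul pi_pos.le, mul_assoc]

/-- Asymptotics of the Catalan numbers, `catalan n = C(2n,n)/(n+1)`:
`(catalan n) · √π · n^{3/2} / 4^n → 1` as `n → ∞`, so that
`log dim H^{(2n)}_trivial = log (C(2n,n) − C(2n,n+1)) ∼ 2n log 2 − (3/2) log n + O(1)`. -/
theorem catalan_asymptotics :
    Tendsto
      (fun n : ℕ => (catalan n : ℝ) * Real.sqrt Real.pi * (n : ℝ) ^ (3 / 2 : ℝ) / 4 ^ n)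
      atTop (nhds 1) := by
  have hne : ∀ᶠ n : ℕ in atTop, 4 ^ n / (√π * n ^ (3 / 2 : ℝ)) ≠ 0 :=
    (eventually_ne_atTop 0).mono fun n hn ↦ by positivity
  refine ((isEquivalent_iff_tendsto_one hne).1 catalan_isEquivalent).congr fun n ↦ ?_
  simp only [Pi.div_apply, div_div_eq_mul_div, mul_assoc]
end

section
/- The sequence n ↦ C(2n, n) · √(π·n) / 4^n tends to 1 as n → ∞. Consequently, log dim H^{(2n)}_{1-loop} = log C(2n,n) behaves asymptotically as 2n·log 2 − (1/2)·log n + O(1), so that for large n the one-loop Hilbert space carries strictly more degrees of freedom than the trivial-topology one: log dim H^{(2n)}_{trivial} ∼ 2n·log 2 − (3/2)·log n < 2n·log 2 − (1/2)·log n ∼ log dim H^{(2n)}_{1-loop}. -/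
/-!
Writing `(2n)! = C(2n,n) · (n!)²` in terms of the Stirling sequence `s n = n! / (√(2n) (n/e)ⁿ)`
gives `C(2n,n) · √n / 4ⁿ = s (2n) / (s n)²`, and `s n → √π` makes the right side tend to `1/√π`.
The inequality is the positivity of `C(2n,n+1)` for `n ≥ 1`.
-/

open Filter Real Stirling

lemma choose_two_mul_self_mul_sqrt_div_four_pow (n : ℕ) :
    ((2 * n).choose n : ℝ) * √n / 4 ^ n = stirlingSeq (2 * n) / stirlingSeq n ^ 2 := by
  rcases eq_or_ne n 0 with rfl | hn
  · simp
  have hfac : ((2 * n).factorial : ℝ) = (2 * n).choose n * n.factorial * n.factorial := by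
    have h := Nat.choose_mul_factorial_mul_factorial (show n ≤ 2 * n by omega)
    rw [show 2 * n - n = n by omega] at h
    exact_mod_cast h.symm
  have hsqrt : √(2 * (2 * n : ℕ) : ℝ) = 2 * √n := by
    rw [show (2 * (2 * n : ℕ) : ℝ) = 2 ^ 2 * n by push_cast; ring, sqrt_mul (by positivity),
      sqrt_sq zero_le_two]
  rw [stirlingSeq, stirlingSeq, hfac, hsqrt]
  field_simp
  push_cast
  rw [sq_sqrt (by positivity), sq_sqrt (by positivity), show (4 : ℝ) = 2 ^ 2 by norm_num,
    ← pow_mul]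
  ring

lemma tendsto_stirlingSeq_two_mul_div_sq :
    Tendsto (fun n ↦ stirlingSeq (2 * n) / stirlingSeq n ^ 2) atTop (nhds (√π)⁻¹) := by
  have hdouble : Tendsto (fun n ↦ stirlingSeq (2 * n)) atTop (nhds √π) :=
    tendsto_stirlingSeq_sqrt_pi.comp (tendsto_id.const_mul_atTop' two_pos)
  have hquot := hdouble.div (tendsto_stirlingSeq_sqrt_pi.pow 2) (by positivity)
  rwa [sq, div_self_mul_self'] at hquot

/-- Asymptotics of the central binomial coefficient: `C(2n,n) · √(πn) / 4^n → 1` as `n → ∞`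
(so `log dim H^{(2n)}_{1-loop} = log C(2n,n) ∼ 2n log 2 − (1/2) log n + O(1)`); moreover for
every `n ≥ 1` the one-loop Hilbert space is strictly larger than the trivial-topology one:
`dim H^{(2n)}_trivial = C(2n,n) − C(2n,n+1) < C(2n,n) = dim H^{(2n)}_{1-loop}`. -/
theorem central_binom_asymptotics_and_one_loop_larger :
    Tendsto
      (fun n : ℕ => (Nat.choose (2 * n) n : ℝ) * Real.sqrt (Real.pi * n) / 4 ^ n)
      atTop (nhds 1) ∧
    ∀ n : ℕ, 1 ≤ n →
      Nat.choose (2 * n) n - Nat.choose (2 * n) (n + 1) < Nat.choose (2 * n) n := by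
  refine ⟨?_, fun n hn ↦ Nat.sub_lt (Nat.choose_pos (by omega)) (Nat.choose_pos (by omega))⟩
  have hlim := tendsto_stirlingSeq_two_mul_div_sq.const_mul √π
  rw [mul_inv_cancel₀ (by positivity)] at hlim
  refine hlim.congr fun n ↦ ?_
  rw [← choose_two_mul_self_mul_sqrt_div_four_pow, sqrt_mul pi_pos.le]
  ring
end
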